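/- Under the hypotheses W H_1 + (1/C)1_C 1_C^⊤ = I_C, H_1 1_C = 0, and μ W^⊤ W = m H_1 H_1^⊤ (μ, m > 0), the normalized class-mean matrix M = H_1 (after normalization M = H_1/‖H_1‖-columnwise) satisfies M^⊤ M = (C/(C-1))(I_C - (1/C) 1_C 1_C^⊤), i.e., the class means form a simplex equiangular tight frame: all columns of H_1 have equal norm and the cosine of the angle between any two distinct columns is -1/(C-1). -/

import Mathlib

/-!
Write `P = I - (1/C) 𝟙𝟙ᵀ` for the centering projection and `G = H₁ᵀ H₁` for the Gram matrix of
the class means. Conjugating `μ Wᵀ W = m H₁ H₁ᵀ` by `H₁` and using `W H₁ = P` gives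
`m G² = μ Pᵀ P = μ P`. Both `G` and `√(μ/m) P` are positive semidefinite with the same square,
so by uniqueness of positive square roots `G = √(μ/m) P`. Hence all columns of `H₁` have the
same squared norm `√(μ/m) (1 - 1/C)`, and normalizing them rescales `G` into `(C/(C-1)) P`.
-/

open Matrix
open scoped MatrixOrder

variable {ι κ : Type*} [Fintype κ]

theorem transpose_mul_self_of_normalized_columns {H M : Matrix κ ι ℝ} {a : ℝ}
    (hdiag : ∀ c, (Hᵀ * H) c c = a) (hM : ∀ i c, M i c = H i c / √(∑ i', H i' c ^ 2)) :
    Mᵀ * M = a⁻¹ • (Hᵀ * H) := by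
  have hnorm : ∀ c, ∑ i, H i c ^ 2 = a := fun c => by
    simpa only [mul_apply, transpose_apply, sq] using hdiag c
  ext c d
  have ha : 0 ≤ a := hnorm c ▸ Finset.sum_nonneg fun i _ => sq_nonneg (H i c)
  rw [Matrix.smul_apply, mul_apply, mul_apply, smul_eq_mul, Finset.mul_sum]
  refine Finset.sum_congr rfl fun i _ => ?_
  rw [transpose_apply, transpose_apply, hM, hM, hnorm, hnorm, div_mul_div_comm,
    Real.mul_self_sqrt ha, div_eq_inv_mul]

variable [Fintype ι] [DecidableEq ι]

theorem Matrix.PosSemidef.eq_smul_of_mul_self_eq_sq_smul {G P : Matrix ι ι ℝ}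
    (hG : G.PosSemidef) (hP : IsStarProjection P) {s : ℝ} (hs : 0 ≤ s)
    (h : G * G = s ^ 2 • P) : G = s • P := by
  refine (CFC.sq_eq_sq_iff G (s • P) hG.nonneg (smul_nonneg hs hP.nonneg)).mp ?_
  rw [sq G, h, smul_pow, sq P, hP.isIdempotentElem.eq]

theorem gram_eq_sqrt_smul_of_mul_eq_starProjection {W : Matrix ι κ ℝ}
    {H : Matrix κ ι ℝ} {P : Matrix ι ι ℝ} (hP : IsStarProjection P) {μ m : ℝ} (hμ : 0 ≤ μ)
    (hm : 0 < m) (hWH : W * H = P) (hbal : μ • (Wᵀ * W) = m • (H * Hᵀ)) :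
    Hᵀ * H = √(μ / m) • P := by
  have hPP : Pᵀ * P = P := by
    have hPsymm : Pᴴ = P := hP.isSelfAdjoint
    rw [← conjTranspose_eq_transpose_of_trivial, hPsymm, hP.isIdempotentElem.eq]
  have hsq : m • (Hᵀ * H * (Hᵀ * H)) = μ • P :=
    calc m • (Hᵀ * H * (Hᵀ * H)) = Hᵀ * (m • (H * Hᵀ)) * H := by
          simp only [Matrix.mul_smul, Matrix.smul_mul, Matrix.mul_assoc]
      _ = μ • ((W * H)ᵀ * (W * H)) := by
          rw [← hbal, transpose_mul]
          simp only [Matrix.mul_smul, Matrix.smul_mul, Matrix.mul_assoc]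
      _ = μ • P := by rw [hWH, hPP]
  refine (posSemidef_conjTranspose_mul_self H).eq_smul_of_mul_self_eq_sq_smul hP
    (Real.sqrt_nonneg _) ?_
  rw [Real.sq_sqrt (div_nonneg hμ hm.le), div_eq_inv_mul, mul_smul, ← hsq, smul_smul,
    inv_mul_cancel₀ hm.ne', one_smul, conjTranspose_eq_transpose_of_trivial]

noncomputable def centeringMatrix (ι : Type*) [Fintype ι] [DecidableEq ι] : Matrix ι ι ℝ :=
  1 - (Fintype.card ι : ℝ)⁻¹ • of fun _ _ => 1

theorem isStarProjection_centeringMatrix :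
    IsStarProjection (centeringMatrix ι) := by
  refine IsStarProjection.one_sub ⟨?_, ?_⟩
  · ext i j
    -- lets `simp` cancel `card ι * (card ι)⁻¹`
    have : Nonempty ι := ⟨i⟩
    simp [mul_apply]
  · ext i j
    simp

theorem centeringMatrix_apply_self (i : ι) :
    centeringMatrix ι i i = 1 - (Fintype.card ι : ℝ)⁻¹ := by
  simp [centeringMatrix]

theorem stmt_15_general (C n : ℕ) (hC : 2 ≤ C) (μ m : ℝ) (hμ : 0 < μ) (hm : 0 < m)
    (W : Matrix (Fin C) (Fin n) ℝ) (H1 : Matrix (Fin n) (Fin C) ℝ)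
    (hres : W * H1 + (C : ℝ)⁻¹ • Matrix.of (fun _ _ : Fin C => (1 : ℝ)) = 1)
    (hinv : μ • (Wᵀ * W) = m • (H1 * H1ᵀ))
    (M : Matrix (Fin n) (Fin C) ℝ)
    (hM : ∀ i c, M i c = H1 i c / Real.sqrt (∑ i', H1 i' c ^ 2)) :
    Mᵀ * M = ((C : ℝ) / ((C : ℝ) - 1)) •
      ((1 : Matrix (Fin C) (Fin C) ℝ) - (C : ℝ)⁻¹ • Matrix.of (fun _ _ : Fin C => (1 : ℝ))) := by
  have hP : centeringMatrix (Fin C) = 1 - (C : ℝ)⁻¹ • of fun _ _ => 1 := by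
    simp only [centeringMatrix, Fintype.card_fin]
  have hgram : H1ᵀ * H1 = √(μ / m) • centeringMatrix (Fin C) :=
    gram_eq_sqrt_smul_of_mul_eq_starProjection isStarProjection_centeringMatrix hμ.le hm
      (by rw [hP, ← hres, add_sub_cancel_right]) hinv
  have hdiag : ∀ c, (H1ᵀ * H1) c c = √(μ / m) * (1 - (C : ℝ)⁻¹) := fun c => by
    rw [hgram, Matrix.smul_apply, centeringMatrix_apply_self, Fintype.card_fin, smul_eq_mul]
  have hs : √(μ / m) ≠ 0 := (Real.sqrt_pos.mpr (div_pos hμ hm)).ne'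
  have hC1 : (C : ℝ) - 1 ≠ 0 := sub_ne_zero.mpr (by norm_cast; omega)
  rw [transpose_mul_self_of_normalized_columns hdiag hM, hgram, smul_smul, ← hP]
  congr 1
  field_simp

/-- Under the end-of-training hypotheses `W H₁ + (1/C) 1_C 1_Cᵀ = I_C`, `H₁ 1_C = 0`, and
`μ Wᵀ W = m H₁ H₁ᵀ`, the column-normalized class-mean matrix `M` satisfies
`Mᵀ M = (C/(C-1)) (I_C - (1/C) 1_C 1_Cᵀ)`, i.e., the class means form a simplex ETF. -/
theorem stmt_15 (C n : ℕ) (hC : 2 ≤ C) (hn : C ≤ n) (μ m : ℝ) (hμ : 0 < μ) (hm : 0 < m)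
    (W : Matrix (Fin C) (Fin n) ℝ) (H1 : Matrix (Fin n) (Fin C) ℝ)
    (hres : W * H1 + (C : ℝ)⁻¹ • Matrix.of (fun _ _ : Fin C => (1 : ℝ)) = 1)
    (hmean : H1.mulVec (fun _ => 1) = 0)
    (hinv : μ • (Wᵀ * W) = m • (H1 * H1ᵀ))
    (M : Matrix (Fin n) (Fin C) ℝ)
    (hM : ∀ i c, M i c = H1 i c / Real.sqrt (∑ i', H1 i' c ^ 2)) :
    Mᵀ * M = ((C : ℝ) / ((C : ℝ) - 1)) •
      ((1 : Matrix (Fin C) (Fin C) ℝ) - (C : ℝ)⁻¹ • Matrix.of (fun _ _ : Fin C => (1 : ℝ))) :=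
  stmt_15_general C n hC μ m hμ hm W H1 hres hinv M hM
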